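/- Suppose there is pretty good state transfer from u to v: there is a sequence of real times t_k and a scalar γ with |γ| = 1 such that H(t_k)e_u → γ e_v. Then E_r e_u = ± E_r e_v for each spectral idempotent E_r. -/

import Mathlib

/-!
Since `E_r A = θ_r E_r`, the exponential series gives `E_r H(t) = e^{i t θ_r} E_r`, so applying
`E_r` to `H(t_k) e_u → γ e_v` yields `e^{i t_k θ_r} E_r e_u → γ E_r e_v`. Along a subsequence the
unimodular scalars converge to some `ζ`, whence `ζ E_r e_u = γ E_r e_v` with `|ζ| = |γ|`.
For real vectors this forces `E_r e_u = ± E_r e_v`: the coordinates have equal absolute values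
and the two vectors are parallel.
-/

open Matrix Complex Filter Topology

theorem OrthogonalIdempotents.mul_sum_smul {R A ι : Type*} [CommSemiring R] [Semiring A]
    [Algebra R A] [Fintype ι] {E : ι → A} (hE : OrthogonalIdempotents E) (θ : ι → R) (r : ι) :
    E r * ∑ s, θ s • E s = θ r • E r := by
  rw [Finset.mul_sum, Finset.sum_eq_single r]
  · rw [mul_smul_comm, (hE.idem r).eq]
  · intro s _ hs
    rw [mul_smul_comm, hE.ortho (Ne.symm hs), smul_zero]
  · exact fun h => absurd (Finset.mem_univ r) h

theorem mul_exp_eq_exp_smul_of_mul_eq_smul {𝔸 : Type*} [NormedRing 𝔸] [NormedAlgebra ℂ 𝔸]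
    [CompleteSpace 𝔸] {P M : 𝔸} {c : ℂ} (h : P * M = c • P) :
    P * NormedSpace.exp M = Complex.exp c • P := by
  let : NormedAlgebra ℚ 𝔸 := NormedAlgebra.restrictScalars ℚ ℂ 𝔸
  have hsemi : SemiconjBy P M (algebraMap ℂ 𝔸 c) := by
    rw [SemiconjBy, h, Algebra.smul_def]
  rw [hsemi.exp_right.eq, ← NormedSpace.algebraMap_exp_comm, ← Complex.exp_eq_exp_ℂ,
    Algebra.smul_def]

theorem Matrix.mul_exp_eq_exp_smul_of_mul_eq_smul {n : Type*} [Fintype n] [DecidableEq n]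
    {P M : Matrix n n ℂ} {c : ℂ} (h : P * M = c • P) :
    P * NormedSpace.exp M = Complex.exp c • P :=
  -- any matrix norm will do: `NormedSpace.exp` depends only on the (product) topology
  letI : NormedRing (Matrix n n ℂ) := Matrix.linftyOpNormedRing
  letI : NormedAlgebra ℂ (Matrix n n ℂ) := Matrix.linftyOpNormedAlgebra
  _root_.mul_exp_eq_exp_smul_of_mul_eq_smul h

theorem exists_norm_eq_one_smul_eq_of_tendsto {𝕜 E : Type*} [NormedField 𝕜] [ProperSpace 𝕜]
    [TopologicalSpace E] [SMul 𝕜 E] [ContinuousSMul 𝕜 E] [T2Space E] {z : ℕ → 𝕜}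
    (hz : ∀ k, ‖z k‖ = 1) {x y : E} (h : Tendsto (fun k => z k • x) atTop (𝓝 y)) :
    ∃ ζ : 𝕜, ‖ζ‖ = 1 ∧ ζ • x = y := by
  obtain ⟨ζ, hζ, φ, hφ, hzφ⟩ :=
    (isCompact_sphere (0 : 𝕜) 1).tendsto_subseq (x := z) (by simpa using hz)
  refine ⟨ζ, by simpa using hζ, tendsto_nhds_unique ?_ (h.comp hφ.tendsto_atTop)⟩
  exact hzφ.smul_const x

theorem eq_or_eq_neg_of_abs_eq_of_cross_mul_eq {ι K : Type*} [Field K] [LinearOrder K]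
    [IsStrictOrderedRing K] {a b : ι → K} (habs : ∀ i, |a i| = |b i|)
    (hcross : ∀ i j, a i * b j = a j * b i) : a = b ∨ a = -b := by
  by_contra! hne
  obtain ⟨i, hi⟩ := Function.ne_iff.mp hne.1
  obtain ⟨j, hj⟩ := Function.ne_iff.mp hne.2
  have hai : a i = -b i := (abs_eq_abs.mp (habs i)).resolve_left hi
  have haj : a j = b j := (abs_eq_abs.mp (habs j)).resolve_right hj
  have hbi : b i ≠ 0 := fun h => hi (by rw [hai, h, neg_zero])
  have hbj : b j ≠ 0 := fun h => hj (by simp [haj, h])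
  exact mul_ne_zero hbi hbj <| by
    linear_combination (-1/2 : K) * hcross i j + (b j / 2) * hai - (b i / 2) * haj

theorem eq_or_eq_neg_of_smul_ofReal_eq {ι : Type*} {a b : ι → ℝ} {ζ γ : ℂ} (hζ : ζ ≠ 0)
    (hnorm : ‖ζ‖ = ‖γ‖) (h : ζ • (ofReal ∘ a) = γ • (ofReal ∘ b)) : a = b ∨ a = -b := by
  have hi : ∀ i, ζ * a i = γ * b i := fun i => by simpa using congr_fun h i
  refine eq_or_eq_neg_of_abs_eq_of_cross_mul_eq (fun i => ?_) (fun i j => ?_)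
  · have := congr_arg norm (hi i)
    rw [norm_mul, norm_mul, hnorm, norm_real, norm_real] at this
    exact mul_left_cancel₀ (hnorm ▸ norm_ne_zero_iff.mpr hζ) this
  · apply ofReal_injective
    push_cast
    exact mul_left_cancel₀ hζ (by linear_combination (b j : ℂ) * hi i - (b i : ℂ) * hi j)

theorem SimpleGraph.map_ofReal_adjMatrix {V : Type*} (G : SimpleGraph V) [DecidableRel G.Adj] :
    (G.adjMatrix ℝ).map ofRealHom = G.adjMatrix ℂ := by
  ext i j
  simp [SimpleGraph.adjMatrix_apply, apply_ite ofRealHom]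

theorem Matrix.map_ofReal_mulVec_single_one {n : Type*} [Fintype n] [DecidableEq n]
    (M : Matrix n n ℝ) (j : n) :
    M.map ofRealHom *ᵥ Pi.single j 1 = ofReal ∘ (M *ᵥ Pi.single j 1) := by
  simp only [mulVec_single_one]
  rfl

theorem pgst_projections_pm_general {V : Type*} [Fintype V] [DecidableEq V]
    (G : SimpleGraph V) [DecidableRel G.Adj]
    {m : ℕ} (θ : Fin m → ℝ) (E : Fin m → Matrix V V ℝ)
    (hidem : ∀ r, E r * E r = E r)
    (horth : ∀ r s, r ≠ s → E r * E s = 0)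
    (hdecomp : G.adjMatrix ℝ = ∑ r, θ r • E r)
    (u v : V) (t : ℕ → ℝ) (γ : ℂ) (hγ : ‖γ‖ = 1)
    (hpgst : Tendsto
      (fun k => NormedSpace.exp ((Complex.I * t k) • G.adjMatrix ℂ) *ᵥ Pi.single u 1)
      atTop (nhds (γ • (Pi.single v 1 : V → ℂ)))) :
    ∀ r, E r *ᵥ Pi.single u 1 = E r *ᵥ Pi.single v 1 ∨
      E r *ᵥ Pi.single u 1 = -(E r *ᵥ Pi.single v 1) := by
  intro r
  set P : Matrix V V ℂ := (E r).map ofRealHom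
  have hPA : P * G.adjMatrix ℂ = (θ r : ℂ) • P := by
    have hEA := (OrthogonalIdempotents.mk hidem horth).mul_sum_smul θ r
    rw [← hdecomp] at hEA
    rw [← G.map_ofReal_adjMatrix, ← Matrix.map_mul, hEA]
    ext i j
    simp [P]
  have hexp (k : ℕ) : P * NormedSpace.exp ((I * t k) • G.adjMatrix ℂ) =
      Complex.exp (I * ↑(t k * θ r)) • P :=
    Matrix.mul_exp_eq_exp_smul_of_mul_eq_smul <| by
      rw [mul_smul_comm, hPA, smul_smul, ofReal_mul, mul_assoc]
  have hlim : Tendsto (fun k => Complex.exp (I * ↑(t k * θ r)) • (P *ᵥ Pi.single u 1)) atTop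
      (𝓝 (γ • (P *ᵥ Pi.single v 1))) := by
    rw [← mulVec_smul]
    refine ((continuous_const.matrix_mulVec continuous_id).tendsto _ |>.comp hpgst).congr
      fun k => ?_
    rw [Function.comp_apply, id_eq, mulVec_mulVec, hexp, smul_mulVec]
  obtain ⟨ζ, hζ, hζγ⟩ :=
    exists_norm_eq_one_smul_eq_of_tendsto (fun k => norm_exp_I_mul_ofReal _) hlim
  rw [Matrix.map_ofReal_mulVec_single_one, Matrix.map_ofReal_mulVec_single_one] at hζγ
  exact eq_or_eq_neg_of_smul_ofReal_eq (norm_ne_zero_iff.mp (hζ ▸ one_ne_zero))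
    (hζ.trans hγ.symm) hζγ

/-- If there is pretty good state transfer from `u` to `v` (i.e. `H(t_k)e_u → γ e_v` along
some sequence of times, with `|γ| = 1`), then `E_r e_u = ± E_r e_v` for each spectral
idempotent `E_r` of the adjacency matrix. -/
theorem pgst_projections_pm {V : Type*} [Fintype V] [DecidableEq V]
    (G : SimpleGraph V) [DecidableRel G.Adj]
    {m : ℕ} (θ : Fin m → ℝ) (E : Fin m → Matrix V V ℝ)
    (hθ : Function.Injective θ)
    (hsym : ∀ r, (E r)ᵀ = E r)
    (hidem : ∀ r, E r * E r = E r)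
    (horth : ∀ r s, r ≠ s → E r * E s = 0)
    (hsum : ∑ r, E r = 1)
    (hdecomp : G.adjMatrix ℝ = ∑ r, θ r • E r)
    (u v : V) (t : ℕ → ℝ) (γ : ℂ) (hγ : ‖γ‖ = 1)
    (hpgst : Tendsto
      (fun k => NormedSpace.exp ((Complex.I * t k) • G.adjMatrix ℂ) *ᵥ Pi.single u 1)
      atTop (nhds (γ • (Pi.single v 1 : V → ℂ)))) :
    ∀ r, E r *ᵥ Pi.single u 1 = E r *ᵥ Pi.single v 1 ∨
      E r *ᵥ Pi.single u 1 = -(E r *ᵥ Pi.single v 1) :=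
  pgst_projections_pm_general G θ E hidem horth hdecomp u v t γ hγ hpgst
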